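/- arXiv:1708.00530 — 4 statements merged into one kernel-verified Lean document; each statement's English description precedes it below -/
import Mathlib

section
/- Bauer–Fike theorem (localization part): Let A be an n×n complex matrix with A = P D P⁻¹ where P is invertible and D is diagonal, and let H be any n×n complex matrix. Set ε = ‖P‖·‖P⁻¹‖·‖H‖ (operator norm). Then every eigenvalue μ of A + H satisfies |μ − λ| ≤ ε for some eigenvalue λ of A. -/
/-!
If `x` is an eigenvector of `A + H` for `μ`, then `y = P⁻¹ x` satisfies `(μ - D) y = P⁻¹ H P y`.
As `D` is diagonal, the left side has norm at least `minᵢ |μ - dᵢ| · ‖y‖`, while the right side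
has norm at most `‖P⁻¹‖ ‖H‖ ‖P‖ · ‖y‖ = ε ‖y‖`.
-/

/-- Operator norm of a complex matrix induced by the Euclidean norm. -/
noncomputable def opNorm {n : ℕ} (A : Matrix (Fin n) (Fin n) ℂ) : ℝ :=
  ‖Matrix.toEuclideanCLM (𝕜 := ℂ) A‖

open Matrix

namespace Matrix

variable {𝕜 ι : Type*} [RCLike 𝕜] [Fintype ι] [DecidableEq ι]

theorem exists_ne_zero_toEuclideanCLM_apply_eq_smul {M : Matrix ι ι 𝕜} {μ : 𝕜}
    (hμ : μ ∈ spectrum 𝕜 M) :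
    ∃ x : EuclideanSpace 𝕜 ι, x ≠ 0 ∧ toEuclideanCLM (𝕜 := 𝕜) M x = μ • x := by
  rw [← spectrum_toLpLin 2, ← Module.End.hasEigenvalue_iff_mem_spectrum] at hμ
  obtain ⟨x, hx⟩ := hμ.exists_hasEigenvector
  exact ⟨x, hx.2, Module.End.mem_eigenspace_iff.1 hx.1⟩

theorem toEuclideanCLM_apply_toEuclideanCLM_nonsing_inv_apply {P : Matrix ι ι 𝕜}
    (hP : IsUnit P) (x : EuclideanSpace 𝕜 ι) :
    toEuclideanCLM (𝕜 := 𝕜) P (toEuclideanCLM (𝕜 := 𝕜) P⁻¹ x) = x := by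
  rw [← mul_apply_eq_comp, ← map_mul, mul_nonsing_inv P ((isUnit_iff_isUnit_det P).1 hP),
    map_one, one_apply_eq_self]

theorem toEuclideanCLM_conj_apply_eq_smul {M P : Matrix ι ι 𝕜} (hP : IsUnit P)
    {x : EuclideanSpace 𝕜 ι} {μ : 𝕜} (hx : toEuclideanCLM (𝕜 := 𝕜) M x = μ • x) :
    toEuclideanCLM (𝕜 := 𝕜) (P⁻¹ * M * P) (toEuclideanCLM (𝕜 := 𝕜) P⁻¹ x) =
      μ • toEuclideanCLM (𝕜 := 𝕜) P⁻¹ x := by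
  rw [map_mul, map_mul, mul_apply_eq_comp, mul_apply_eq_comp,
    toEuclideanCLM_apply_toEuclideanCLM_nonsing_inv_apply hP, hx, map_smul]

theorem exists_norm_sub_mul_norm_le_norm_smul_sub_diagonal (d : ι → 𝕜) (μ : 𝕜)
    {y : EuclideanSpace 𝕜 ι} (hy : y ≠ 0) :
    ∃ i, ‖μ - d i‖ * ‖y‖ ≤ ‖μ • y - toEuclideanCLM (𝕜 := 𝕜) (diagonal d) y‖ := by
  have : Nonempty ι := by
    by_contra h
    rw [not_nonempty_iff] at h
    exact hy (Subsingleton.elim _ _)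
  obtain ⟨i, hi⟩ := Finite.exists_min fun i => ‖μ - d i‖
  refine ⟨i, ?_⟩
  have hcoord : ∀ j, (μ • y - toEuclideanCLM (𝕜 := 𝕜) (diagonal d) y) j = (μ - d j) * y j := by
    intro j
    simp [sub_mul, mulVec_diagonal]
  rw [← sq_le_sq₀ (by positivity) (by positivity), mul_pow, EuclideanSpace.norm_sq_eq,
    EuclideanSpace.norm_sq_eq, Finset.mul_sum]
  gcongr with j
  rw [hcoord, norm_mul, mul_pow]
  gcongr
  exact hi j

end Matrix

theorem opNorm_mul_le {n : ℕ} (A B : Matrix (Fin n) (Fin n) ℂ) :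
    opNorm (A * B) ≤ opNorm A * opNorm B := by
  unfold opNorm
  rw [map_mul]
  exact ContinuousLinearMap.opNorm_comp_le _ _

/-- Bauer–Fike theorem, localization part. -/
theorem bauer_fike_localization {n : ℕ} (A D H P : Matrix (Fin n) (Fin n) ℂ)
    (d : Fin n → ℂ) (hP : IsUnit P) (hD : D = Matrix.diagonal d)
    (hA : A = P * D * P⁻¹)
    (ε : ℝ) (hε : ε = opNorm P * opNorm P⁻¹ * opNorm H)
    (μ : ℂ) (hμ : μ ∈ spectrum ℂ (A + H)) :
    ∃ i, ‖μ - d i‖ ≤ ε := by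
  obtain ⟨x, hx0, hx⟩ := exists_ne_zero_toEuclideanCLM_apply_eq_smul hμ
  set T := toEuclideanCLM (𝕜 := ℂ) (n := Fin n)
  set y := T P⁻¹ x
  have hxy : T P y = x := toEuclideanCLM_apply_toEuclideanCLM_nonsing_inv_apply hP x
  have hy0 : y ≠ 0 := fun h ↦ hx0 (by rw [← hxy, h, map_zero])
  have hconj : P⁻¹ * (A + H) * P = D + P⁻¹ * H * P := by
    have hPP := nonsing_inv_mul P ((isUnit_iff_isUnit_det P).1 hP)
    rw [hA, mul_add, add_mul]
    simp only [← mul_assoc, hPP, one_mul]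
    rw [mul_assoc, hPP, mul_one]
  have hy : T D y + T (P⁻¹ * H * P) y = μ • y := by
    rw [← _root_.add_apply, ← map_add, ← hconj]
    exact toEuclideanCLM_conj_apply_eq_smul hP hx
  obtain ⟨i, hi⟩ := exists_norm_sub_mul_norm_le_norm_smul_sub_diagonal d μ hy0
  refine ⟨i, le_of_mul_le_mul_right ?_ (norm_pos_iff.2 hy0)⟩
  calc ‖μ - d i‖ * ‖y‖ ≤ ‖T (P⁻¹ * H * P) y‖ := by
        rwa [← hy, hD, add_sub_cancel_left] at hi
    _ ≤ opNorm (P⁻¹ * H * P) * ‖y‖ := ContinuousLinearMap.le_opNorm _ _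
    _ ≤ opNorm (P⁻¹ * H) * opNorm P * ‖y‖ := by gcongr; exact opNorm_mul_le _ _
    _ ≤ opNorm P⁻¹ * opNorm H * opNorm P * ‖y‖ := by
        gcongr
        · exact norm_nonneg _
        · exact opNorm_mul_le _ _
    _ = ε * ‖y‖ := by rw [hε]; ring
end

section
/- Key step of Bauer–Fike: if A = P D P⁻¹ is diagonalizable, H is any matrix, and μ is an eigenvalue of A + H which is not an eigenvalue of A, then the matrix I + (D − μI)⁻¹ P⁻¹ H P is singular, and hence 1 ≤ ‖(D − μI)⁻¹‖ · ‖P⁻¹‖ · ‖H‖ · ‖P‖. -/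
/-- Key step of Bauer–Fike: the matrix `I + (D - μI)⁻¹ P⁻¹ H P` is singular, hence
`1 ≤ ‖(D - μI)⁻¹‖ ‖P⁻¹‖ ‖H‖ ‖P‖`. -/
theorem bauer_fike_key_step {n : ℕ} (A D H P : Matrix (Fin n) (Fin n) ℂ)
    (d : Fin n → ℂ) (hP : IsUnit P) (hD : D = Matrix.diagonal d)
    (hA : A = P * D * P⁻¹)
    (μ : ℂ) (hμ : μ ∈ spectrum ℂ (A + H)) (hμA : μ ∉ spectrum ℂ A) :
    ¬ IsUnit (1 + (D - μ • (1 : Matrix (Fin n) (Fin n) ℂ))⁻¹ * P⁻¹ * H * P) ∧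
      1 ≤ opNorm (D - μ • (1 : Matrix (Fin n) (Fin n) ℂ))⁻¹ * opNorm P⁻¹ *
        opNorm H * opNorm P := by
  rcases Nat.eq_zero_or_pos n with hn | hn
  · subst hn
    exact absurd hμ (by rw [spectrum.notMem_iff]; exact isUnit_of_subsingleton _)
  set E : Matrix (Fin n) (Fin n) ℂ := D - μ • 1 with hE
  set X : Matrix (Fin n) (Fin n) ℂ := E⁻¹ * P⁻¹ * H * P with hX
  have hPdet : IsUnit P.det := (Matrix.isUnit_iff_isUnit_det P).mp hP
  have hPP : P * P⁻¹ = 1 := Matrix.mul_nonsing_inv P hPdet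
  have hP'P : P⁻¹ * P = 1 := Matrix.nonsing_inv_mul P hPdet
  have hPinv : IsUnit P⁻¹ := Matrix.isUnit_nonsing_inv_iff.mpr hP
  have hAμ : IsUnit (A - μ • 1) := by
    have := spectrum.notMem_iff.mp hμA
    rw [Algebra.algebraMap_eq_smul_one] at this
    simpa [neg_sub] using this.neg
  have hconj : P * E * P⁻¹ = A - μ • 1 := by
    rw [hE, hA]
    rw [Matrix.mul_sub, Matrix.sub_mul]
    congr 1
    simp [Matrix.mul_smul, Matrix.smul_mul, hPP]
  have hEunit : IsUnit E := by
    have : E = P⁻¹ * (A - μ • 1) * P := by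
      rw [← hconj]
      simp only [← Matrix.mul_assoc, hP'P, Matrix.one_mul]
      rw [Matrix.mul_assoc, hP'P, Matrix.mul_one]
    rw [this]
    exact (hPinv.mul hAμ).mul hP
  have hEE : E * E⁻¹ = 1 := Matrix.mul_nonsing_inv E ((Matrix.isUnit_iff_isUnit_det E).mp hEunit)
  have hkey : A + H - μ • 1 = P * E * (1 + X) * P⁻¹ := by
    rw [Matrix.mul_add, Matrix.mul_one, Matrix.add_mul, hconj, hX]
    have : P * E * (E⁻¹ * P⁻¹ * H * P) * P⁻¹ = H := by
      rw [show P * E * (E⁻¹ * P⁻¹ * H * P) * P⁻¹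
          = P * (E * E⁻¹) * (P⁻¹ * H) * (P * P⁻¹) by simp only [Matrix.mul_assoc],
        hEE, hPP, Matrix.mul_one, Matrix.mul_one, ← Matrix.mul_assoc, hPP, Matrix.one_mul]
    rw [this]
    abel
  have hsing : ¬ IsUnit (1 + X) := by
    intro h
    have hunit : IsUnit (A + H - μ • 1) := by
      rw [hkey]
      exact ((hP.mul hEunit).mul h).mul hPinv
    have := spectrum.mem_iff.mp hμ
    rw [Algebra.algebraMap_eq_smul_one] at this
    exact this (by simpa [neg_sub] using hunit.neg)
  refine ⟨hsing, ?_⟩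
  have hmem : (-1 : ℂ) ∈ spectrum ℂ X := by
    rw [spectrum.mem_iff, Algebra.algebraMap_eq_smul_one]
    intro h
    apply hsing
    simpa [neg_add_rev, add_comm] using h.neg
  have hmem' : (-1 : ℂ) ∈ spectrum ℂ (Matrix.toEuclideanCLM (𝕜 := ℂ) X) := by
    rwa [AlgEquiv.spectrum_eq (Matrix.toEuclideanCLM (𝕜 := ℂ) (n := Fin n)) X]
  haveI : Nontrivial (EuclideanSpace ℂ (Fin n)) := by
    have : Nonempty (Fin n) := ⟨⟨0, hn⟩⟩
    infer_instance
  have h1 : (1 : ℝ) ≤ ‖Matrix.toEuclideanCLM (𝕜 := ℂ) X‖ := by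
    simpa using spectrum.norm_le_norm_of_mem hmem'
  calc (1 : ℝ) ≤ ‖Matrix.toEuclideanCLM (𝕜 := ℂ) X‖ := h1
    _ ≤ opNorm E⁻¹ * opNorm P⁻¹ * opNorm H * opNorm P := by
        rw [hX]
        simp only [map_mul]
        unfold opNorm
        refine le_trans (norm_mul_le _ _) ?_
        refine mul_le_mul_of_nonneg_right ?_ (norm_nonneg _)
        refine le_trans (norm_mul_le _ _) ?_
        exact mul_le_mul_of_nonneg_right (norm_mul_le _ _) (norm_nonneg _)
end

section
/- Rank-one perturbation lemma: Let M = x yᵀ be a real n×n rank-1 diagonalizable matrix with μ = ⟨x,y⟩ ≠ 0, and let H be any real n×n matrix. Set ε = 2‖x‖²‖y‖² μ⁻² ‖H‖. Then every eigenvalue of M + H lies in B(0,ε) ∪ B(μ,ε). -/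
/-- Operator norm of a real matrix induced by the Euclidean norm. -/
noncomputable def opNormR {n : ℕ} (A : Matrix (Fin n) (Fin n) ℝ) : ℝ :=
  ‖Matrix.toEuclideanCLM (𝕜 := ℝ) A‖

/-- Euclidean norm of a real vector. -/
noncomputable def eNorm {n : ℕ} (v : Fin n → ℝ) : ℝ :=
  Real.sqrt (∑ i, v i ^ 2)

/-!
Write `P = μ⁻¹ x yᵀ`, an idempotent, so that `M = μ P` and
`(z - M)⁻¹ = z⁻¹ (1 - P) + (z - μ)⁻¹ P`. Both `P` and `1 - P` have operator norm at most
`k = ‖x‖ ‖y‖ / |μ|`, and `k ≥ 1` by Cauchy–Schwarz. If `|z| > ε` and `|z - μ| > ε` with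
`ε = 2 k² ‖H‖`, then `‖(z - M)⁻¹ H‖ ≤ (k / |z| + k / |z - μ|) ‖H‖ < 1`, so
`z - M - H = (z - M) (1 - (z - M)⁻¹ H)` is invertible by the Neumann series.
Since the complex operator norm of a real matrix is bounded by its real one, all norm
estimates can be done over `ℝ`.
-/

open Metric InnerProductSpace Matrix
open scoped InnerProductSpace

section IdempotentPerturbation

variable {𝕜 A : Type*} [NormedField 𝕜] [NormedRing A] [NormedAlgebra 𝕜 A]

theorem IsIdempotentElem.algebraMap_sub_smul_mul_resolvent {p : A} (hp : IsIdempotentElem p)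
    {μ z : 𝕜} (hz : z ≠ 0) (hzμ : z - μ ≠ 0) :
    (algebraMap 𝕜 A z - μ • p) * (z⁻¹ • (1 - p) + (z - μ)⁻¹ • p) = 1 ∧
      (z⁻¹ • (1 - p) + (z - μ)⁻¹ • p) * (algebraMap 𝕜 A z - μ • p) = 1 := by
  rw [Algebra.algebraMap_eq_smul_one]
  constructor <;>
  · simp only [sub_mul, mul_sub, add_mul, mul_add, smul_mul_smul_comm, one_mul, mul_one, hp.eq]
    rw [show (1 : A) = (1 : 𝕜) • (1 : A) from (one_smul _ _).symm]
    match_scalars <;> field_simp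
    ring

private lemma div_mul_lt_half {k η a : ℝ} (hk : 1 ≤ k) (hη : 0 ≤ η) (ha : 2 * k ^ 2 * η < a) :
    k / a * η < 1 / 2 := by
  have ha0 : 0 < a := lt_of_le_of_lt (by positivity) ha
  rw [div_mul_eq_mul_div, div_lt_iff₀ ha0]
  nlinarith

variable [CompleteSpace A]

theorem IsIdempotentElem.spectrum_smul_add_subset {p : A} (hp : IsIdempotentElem p) {k : ℝ}
    (hk : 1 ≤ k) (hpk : ‖p‖ ≤ k) (hqk : ‖1 - p‖ ≤ k) (μ : 𝕜) (h : A) :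
    spectrum 𝕜 (μ • p + h) ⊆ closedBall 0 (2 * k ^ 2 * ‖h‖) ∪ closedBall μ (2 * k ^ 2 * ‖h‖) := by
  intro z hz
  by_contra hout
  simp only [Set.mem_union, mem_closedBall, dist_eq_norm, sub_zero, not_or, not_le] at hout
  obtain ⟨hz0, hzμ⟩ := hout
  have hε : 0 ≤ 2 * k ^ 2 * ‖h‖ := by positivity
  obtain ⟨hleft, hright⟩ := hp.algebraMap_sub_smul_mul_resolvent (μ := μ)
    (norm_pos_iff.mp (hε.trans_lt hz0)) (norm_pos_iff.mp (hε.trans_lt hzμ))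
  set r := z⁻¹ • (1 - p) + (z - μ)⁻¹ • p
  have hr : ‖r‖ ≤ k / ‖z‖ + k / ‖z - μ‖ := by
    refine (norm_add_le _ _).trans (add_le_add ?_ ?_) <;>
    · refine (norm_smul_le _ _).trans ?_
      rw [norm_inv, inv_mul_eq_div]
      gcongr
  have hrh : ‖r * h‖ < 1 :=
    calc ‖r * h‖ ≤ ‖r‖ * ‖h‖ := norm_mul_le _ _
      _ ≤ k / ‖z‖ * ‖h‖ + k / ‖z - μ‖ * ‖h‖ := by rw [← add_mul]; gcongr
      _ < 1 / 2 + 1 / 2 := add_lt_add (div_mul_lt_half hk (norm_nonneg h) hz0)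
          (div_mul_lt_half hk (norm_nonneg h) hzμ)
      _ = 1 := add_halves 1
  have hfactor : algebraMap 𝕜 A z - (μ • p + h) = (algebraMap 𝕜 A z - μ • p) * (1 - r * h) := by
    rw [mul_sub, mul_one, ← mul_assoc, hleft, one_mul, sub_add_eq_sub_sub]
  apply hz
  rw [spectrum.mem_resolventSet_iff, hfactor]
  exact (Units.mk _ r hleft hright).isUnit.mul (Units.oneSub _ hrh).isUnit

end IdempotentPerturbation

section RankOne

theorem isIdempotentElem_inv_inner_smul_rankOne {𝕜 E : Type*} [RCLike 𝕜] [NormedAddCommGroup E]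
    [InnerProductSpace 𝕜 E] (u w : E) :
    IsIdempotentElem ((⟪w, u⟫_𝕜)⁻¹ • rankOne 𝕜 u w) := by
  rcases eq_or_ne ⟪w, u⟫_𝕜 0 with h | h
  · simp [h, IsIdempotentElem]
  · rw [IsIdempotentElem, ContinuousLinearMap.mul_def, ContinuousLinearMap.smul_comp,
      ContinuousLinearMap.comp_smul, rankOne_comp_rankOne, smul_smul, smul_smul,
      inv_mul_cancel_right₀ h]

variable {E : Type*} [NormedAddCommGroup E] [InnerProductSpace ℝ E]

/- The squared gap between the two sides is the Gram determinant of `u, v, w`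
plus `(‖w‖ ⟪u, v⟫)²`. -/
theorem norm_inner_smul_sub_inner_smul_le (u v w : E) :
    ‖⟪w, u⟫_ℝ • v - ⟪w, v⟫_ℝ • u‖ ≤ ‖u‖ * ‖v‖ * ‖w‖ := by
  have hdet := (posSemidef_gram ℝ ![u, v, w]).det_nonneg
  simp only [det_fin_three, gram_apply, cons_val_zero, cons_val_one, cons_val_two, head_cons,
    tail_cons, real_inner_self_eq_norm_sq] at hdet
  refine le_of_sq_le_sq ?_ (by positivity)
  rw [norm_sub_sq_real, norm_smul, norm_smul, inner_smul_left, inner_smul_right,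
    Real.norm_eq_abs, Real.norm_eq_abs, conj_trivial]
  rw [real_inner_comm u v, real_inner_comm u w, real_inner_comm v w] at hdet
  rw [real_inner_comm u v, real_inner_comm u w, real_inner_comm v w, mul_pow, mul_pow, sq_abs,
    sq_abs]
  nlinarith [sq_nonneg (‖w‖ * ⟪u, v⟫_ℝ)]

theorem norm_one_sub_inv_inner_smul_rankOne_le (u w : E) (huw : ⟪w, u⟫_ℝ ≠ 0) :
    ‖1 - (⟪w, u⟫_ℝ)⁻¹ • rankOne ℝ u w‖ ≤ ‖u‖ * ‖w‖ / |⟪w, u⟫_ℝ| := by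
  refine ContinuousLinearMap.opNorm_le_bound _ (by positivity) fun v => ?_
  have hv : (1 - (⟪w, u⟫_ℝ)⁻¹ • rankOne ℝ u w) v =
      (⟪w, u⟫_ℝ)⁻¹ • (⟪w, u⟫_ℝ • v - ⟪w, v⟫_ℝ • u) := by
    simp [smul_sub, smul_smul, inv_mul_cancel₀ huw]
  rw [hv, norm_smul, norm_inv, Real.norm_eq_abs, inv_mul_eq_div, div_mul_eq_mul_div,
    div_le_div_iff_of_pos_right (abs_pos.mpr huw)]
  linarith [norm_inner_smul_sub_inner_smul_le u v w]

end RankOne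

theorem Matrix.toEuclideanCLM_vecMulVec_star {𝕜 n : Type*} [RCLike 𝕜] [Fintype n]
    [DecidableEq n] (x y : n → 𝕜) :
    toEuclideanCLM (𝕜 := 𝕜) (n := n) (vecMulVec x (star y)) =
      rankOne 𝕜 (WithLp.toLp 2 x) (WithLp.toLp 2 y) := by
  apply ContinuousLinearMap.coe_injective
  rw [coe_toEuclideanCLM_eq_toEuclideanLin, ← symm_toEuclideanLin_rankOne,
    LinearEquiv.apply_symm_apply]

theorem EuclideanSpace.real_inner_toLp_toLp {n : Type*} [Fintype n] (x y : n → ℝ) :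
    ⟪WithLp.toLp 2 x, WithLp.toLp 2 y⟫_ℝ = y ⬝ᵥ x := by
  rw [EuclideanSpace.inner_toLp_toLp, star_trivial]

theorem EuclideanSpace.norm_sq_eq_norm_sq_re_add_norm_sq_im {n : Type*} [Fintype n]
    (v : EuclideanSpace ℂ n) :
    ‖v‖ ^ 2 = ‖WithLp.toLp 2 fun i => (v i).re‖ ^ 2 + ‖WithLp.toLp 2 fun i => (v i).im‖ ^ 2 := by
  simp only [EuclideanSpace.norm_sq_eq, ← Finset.sum_add_distrib, Complex.sq_norm,
    Complex.normSq_apply, Real.norm_eq_abs, sq_abs, ← sq]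

section L2OpNorm

open scoped Matrix.Norms.L2Operator

theorem Matrix.l2_opNorm_map_ofReal_le {m n : Type*} [Fintype m] [Fintype n] [DecidableEq n]
    (A : Matrix m n ℝ) : ‖A.map ((↑) : ℝ → ℂ)‖ ≤ ‖A‖ := by
  rw [l2_opNorm_def]
  refine ContinuousLinearMap.opNorm_le_bound _ (norm_nonneg _) fun v => ?_
  set a : EuclideanSpace ℝ n := WithLp.toLp 2 fun j => (v j).re
  set b : EuclideanSpace ℝ n := WithLp.toLp 2 fun j => (v j).im
  have hre : (fun i => ((A.map ((↑) : ℝ → ℂ) *ᵥ v.ofLp) i).re) = A *ᵥ a.ofLp := by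
    ext i; simp [mulVec, dotProduct, Complex.re_sum, a]
  have him : (fun i => ((A.map ((↑) : ℝ → ℂ) *ᵥ v.ofLp) i).im) = A *ᵥ b.ofLp := by
    ext i; simp [mulVec, dotProduct, Complex.im_sum, b]
  have hAv := EuclideanSpace.norm_sq_eq_norm_sq_re_add_norm_sq_im
    (WithLp.toLp 2 (A.map ((↑) : ℝ → ℂ) *ᵥ v.ofLp))
  rw [hre, him] at hAv
  have ha : ‖WithLp.toLp 2 (A *ᵥ a.ofLp)‖ ≤ ‖A‖ * ‖a‖ := l2_opNorm_mulVec A a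
  have hb : ‖WithLp.toLp 2 (A *ᵥ b.ofLp)‖ ≤ ‖A‖ * ‖b‖ := l2_opNorm_mulVec A b
  refine le_of_sq_le_sq ?_ (by positivity)
  change ‖WithLp.toLp 2 (A.map ((↑) : ℝ → ℂ) *ᵥ v.ofLp)‖ ^ 2 ≤ _
  rw [hAv, mul_pow, EuclideanSpace.norm_sq_eq_norm_sq_re_add_norm_sq_im v, mul_add, ← mul_pow,
    ← mul_pow]
  exact add_le_add (pow_le_pow_left₀ (norm_nonneg _) ha 2) (pow_le_pow_left₀ (norm_nonneg _) hb 2)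

variable {n : Type*} [Fintype n] [DecidableEq n] (x y : n → ℝ)

theorem Matrix.toEuclideanCLM_inv_dotProduct_smul_vecMulVec :
    toEuclideanCLM (𝕜 := ℝ) (n := n) ((x ⬝ᵥ y)⁻¹ • vecMulVec x y) =
      (⟪WithLp.toLp 2 y, WithLp.toLp 2 x⟫_ℝ)⁻¹ •
        rankOne ℝ (WithLp.toLp 2 x) (WithLp.toLp 2 y) := by
  rw [map_smul, ← star_trivial y, toEuclideanCLM_vecMulVec_star, star_trivial,
    EuclideanSpace.real_inner_toLp_toLp]

theorem Matrix.isIdempotentElem_inv_dotProduct_smul_vecMulVec :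
    IsIdempotentElem ((x ⬝ᵥ y)⁻¹ • vecMulVec x y) := by
  have h := (isIdempotentElem_inv_inner_smul_rankOne (𝕜 := ℝ) (WithLp.toLp 2 x)
    (WithLp.toLp 2 y)).map (toEuclideanCLM (𝕜 := ℝ) (n := n)).symm
  rwa [← toEuclideanCLM_inv_dotProduct_smul_vecMulVec, StarAlgEquiv.symm_apply_apply] at h

theorem Matrix.l2_opNorm_inv_dotProduct_smul_vecMulVec :
    ‖(x ⬝ᵥ y)⁻¹ • vecMulVec x y‖ = ‖WithLp.toLp 2 x‖ * ‖WithLp.toLp 2 y‖ / |x ⬝ᵥ y| := by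
  rw [cstar_norm_def, toEuclideanCLM_inv_dotProduct_smul_vecMulVec, norm_smul, norm_rankOne,
    norm_inv, Real.norm_eq_abs, EuclideanSpace.real_inner_toLp_toLp, inv_mul_eq_div]

theorem Matrix.l2_opNorm_one_sub_inv_dotProduct_smul_vecMulVec_le (hxy : x ⬝ᵥ y ≠ 0) :
    ‖1 - (x ⬝ᵥ y)⁻¹ • vecMulVec x y‖ ≤ ‖WithLp.toLp 2 x‖ * ‖WithLp.toLp 2 y‖ / |x ⬝ᵥ y| := by
  rw [cstar_norm_def, map_sub, map_one, toEuclideanCLM_inv_dotProduct_smul_vecMulVec]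
  rw [← EuclideanSpace.real_inner_toLp_toLp] at hxy ⊢
  exact norm_one_sub_inv_inner_smul_rankOne_le _ _ hxy

theorem Matrix.spectrum_map_ofReal_vecMulVec_add_subset (hxy : x ⬝ᵥ y ≠ 0) (H : Matrix n n ℝ) :
    spectrum ℂ ((vecMulVec x y + H).map ((↑) : ℝ → ℂ)) ⊆
      closedBall 0 (2 * ‖WithLp.toLp 2 x‖ ^ 2 * ‖WithLp.toLp 2 y‖ ^ 2 * (x ⬝ᵥ y)⁻¹ ^ 2 * ‖H‖) ∪
      closedBall ↑(x ⬝ᵥ y)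
        (2 * ‖WithLp.toLp 2 x‖ ^ 2 * ‖WithLp.toLp 2 y‖ ^ 2 * (x ⬝ᵥ y)⁻¹ ^ 2 * ‖H‖) := by
  set P : Matrix n n ℝ := (x ⬝ᵥ y)⁻¹ • vecMulVec x y
  set k := ‖WithLp.toLp 2 x‖ * ‖WithLp.toLp 2 y‖ / |x ⬝ᵥ y|
  have hk : 1 ≤ k := by
    rw [one_le_div (abs_pos.mpr hxy), ← EuclideanSpace.real_inner_toLp_toLp, mul_comm]
    exact abs_real_inner_le_norm _ _
  have hPk : ‖P.map ((↑) : ℝ → ℂ)‖ ≤ k :=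
    (l2_opNorm_map_ofReal_le P).trans_eq (l2_opNorm_inv_dotProduct_smul_vecMulVec x y)
  have hQk : ‖1 - P.map ((↑) : ℝ → ℂ)‖ ≤ k := by
    have h1P : 1 - P.map ((↑) : ℝ → ℂ) = (1 - P).map ((↑) : ℝ → ℂ) := by
      simp [Matrix.map_sub, Matrix.map_one]
    rw [h1P]
    exact (l2_opNorm_map_ofReal_le _).trans
      (l2_opNorm_one_sub_inv_dotProduct_smul_vecMulVec_le x y hxy)
  have hsplit : (vecMulVec x y + H).map ((↑) : ℝ → ℂ) =
      ((x ⬝ᵥ y : ℝ) : ℂ) • P.map ((↑) : ℝ → ℂ) + H.map ((↑) : ℝ → ℂ) := by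
    ext i j
    simp [P, hxy]
  have hradius : 2 * k ^ 2 * ‖H.map ((↑) : ℝ → ℂ)‖ ≤
      2 * ‖WithLp.toLp 2 x‖ ^ 2 * ‖WithLp.toLp 2 y‖ ^ 2 * (x ⬝ᵥ y)⁻¹ ^ 2 * ‖H‖ :=
    calc 2 * k ^ 2 * ‖H.map ((↑) : ℝ → ℂ)‖ ≤ 2 * k ^ 2 * ‖H‖ := by
          gcongr; exact l2_opNorm_map_ofReal_le H
      _ = _ := by rw [div_pow, mul_pow, sq_abs]; ring
  rw [hsplit]
  refine ((isIdempotentElem_inv_dotProduct_smul_vecMulVec x y).map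
    Complex.ofRealHom.mapMatrix |>.spectrum_smul_add_subset hk hPk hQk _ _).trans ?_
  exact Set.union_subset_union (closedBall_subset_closedBall hradius)
    (closedBall_subset_closedBall hradius)

end L2OpNorm

theorem rank_one_perturbation_general {n : ℕ} (x y : Fin n → ℝ)
    (H : Matrix (Fin n) (Fin n) ℝ)
    (μ : ℝ) (hμ : μ = ∑ i, x i * y i) (hμ0 : μ ≠ 0)
    (M : Matrix (Fin n) (Fin n) ℝ) (hM : M = Matrix.of fun i j => x i * y j)
    (ε : ℝ) (hε : ε = 2 * eNorm x ^ 2 * eNorm y ^ 2 * μ⁻¹ ^ 2 * opNormR H)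
    (z : ℂ) (hz : z ∈ spectrum ℂ ((M + H).map (Complex.ofReal ·))) :
    z ∈ Metric.closedBall (0 : ℂ) ε ∨ z ∈ Metric.closedBall (μ : ℂ) ε := by
  have heNorm (v : Fin n → ℝ) : eNorm v = ‖WithLp.toLp 2 v‖ := by
    simp [eNorm, EuclideanSpace.norm_eq]
  subst hM hε hμ
  rw [heNorm, heNorm]
  -- `opNormR H` is the L2 operator norm `‖H‖`, and `M` is `vecMulVec x y`, definitionally.
  exact spectrum_map_ofReal_vecMulVec_add_subset x y hμ0 H hz

/-- Rank-one perturbation lemma: every (complex) eigenvalue of `M + H`, where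
`M = x yᵀ` with `μ = ⟨x,y⟩ ≠ 0`, lies in `B(0,ε) ∪ B(μ,ε)` with
`ε = 2 ‖x‖² ‖y‖² μ⁻² ‖H‖`. -/
theorem rank_one_perturbation {n : ℕ} (x y : Fin n → ℝ) (hx : x ≠ 0) (hy : y ≠ 0)
    (H : Matrix (Fin n) (Fin n) ℝ)
    (μ : ℝ) (hμ : μ = ∑ i, x i * y i) (hμ0 : μ ≠ 0)
    (M : Matrix (Fin n) (Fin n) ℝ) (hM : M = Matrix.of fun i j => x i * y j)
    (ε : ℝ) (hε : ε = 2 * eNorm x ^ 2 * eNorm y ^ 2 * μ⁻¹ ^ 2 * opNormR H)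
    (z : ℂ) (hz : z ∈ spectrum ℂ ((M + H).map (Complex.ofReal ·))) :
    z ∈ Metric.closedBall (0 : ℂ) ε ∨ z ∈ Metric.closedBall (μ : ℂ) ε :=
  rank_one_perturbation_general x y H μ hμ hμ0 M hM ε hε z hz
end

section
/- Continuity/counting part of Bauer–Fike: with A diagonalizable, A = PDP⁻¹, H arbitrary, ε = ‖P‖‖P⁻¹‖‖H‖, if I ⊆ {1,...,n} satisfies (∪_{i∈I} B(λ_i,ε)) ∩ (∪_{i∉I} B(λ_i,ε)) = ∅, then the number of eigenvalues of A+H (counted with multiplicity) lying in ∪_{i∈I} B(λ_i,ε) is exactly |I|. -/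
open Polynomial Filter Topology

theorem Multiset.exists_map_univ_eq_of_card_eq {α : Type*} {s : Multiset α} {n : ℕ}
    (hs : Multiset.card s = n) : ∃ r : Fin n → α, Finset.univ.val.map r = s := by
  obtain ⟨l, rfl⟩ : ∃ l : List α, (l : Multiset α) = s := Quotient.exists_rep s
  rw [Multiset.coe_card] at hs
  subst hs
  exact ⟨l.get, by rw [Fin.univ_val_map, List.ofFn_get]⟩

theorem Filter.Tendsto.eventually_mem_iff_of_disjoint {X α : Type*} [TopologicalSpace X]
    {l : Filter α} {K K' : Set X} (hK : IsClosed K) (hK' : IsClosed K') (hKK' : Disjoint K K')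
    {x : α → X} {y : X} (hxy : Tendsto x l (𝓝 y)) (hx : ∀ᶠ k in l, x k ∈ K ∪ K') :
    ∀ᶠ k in l, x k ∈ K ↔ y ∈ K := by
  by_cases hy : y ∈ K
  · have hy' : ∀ᶠ k in l, x k ∉ K' :=
      hxy (hK'.isOpen_compl.mem_nhds (hKK'.notMem_of_mem_left hy))
    filter_upwards [hx, hy'] with k hk hk'
    simpa [hy, hk'] using hk
  · filter_upwards [hxy (hK.isOpen_compl.mem_nhds hy)] with k hk
    simp_all

namespace Polynomial

theorem exists_eq_prod_X_sub_C_of_natDegree_eq {K : Type*} [Field K] [IsAlgClosed K]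
    {p : K[X]} {n : ℕ} (hp : p.Monic) (hn : p.natDegree = n) :
    ∃ r : Fin n → K, p = ∏ i, (X - C (r i)) := by
  have hsplit := IsAlgClosed.splits p
  obtain ⟨r, hr⟩ := Multiset.exists_map_univ_eq_of_card_eq (s := p.roots) (n := n)
    (by rw [← hn, hsplit.natDegree_eq_card_roots])
  refine ⟨r, ?_⟩
  conv_lhs => rw [hsplit.eq_prod_roots_of_monic hp, ← hr, Multiset.map_map]
  rfl

theorem roots_prod_X_sub_C_fintype {R ι : Type*} [CommRing R] [IsDomain R] [Fintype ι]
    (r : ι → R) : (∏ i, (X - C (r i))).roots = Finset.univ.val.map r := by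
  rw [roots_prod _ _ (Finset.prod_ne_zero_iff.2 fun i _ => X_sub_C_ne_zero (r i))]
  simp

theorem card_roots_filter_prod_X_sub_C {R ι : Type*} [CommRing R] [IsDomain R] [Fintype ι]
    (r : ι → R) (K : Set R) [DecidablePred (· ∈ K)] :
    Multiset.card ((∏ i, (X - C (r i))).roots.filter (· ∈ K)) =
      (Finset.univ.filter fun i => r i ∈ K).card := by
  rw [roots_prod_X_sub_C_fintype, Multiset.filter_map, Multiset.card_map]
  rfl

theorem eq_prod_X_sub_C_of_tendsto {R ι α : Type*} [CommRing R] [IsDomain R] [Infinite R]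
    [TopologicalSpace R] [IsTopologicalRing R] [T2Space R] [Fintype ι]
    {l : Filter α} [l.NeBot] {q : α → R[X]} {r : α → ι → R} {p : R[X]} {s : ι → R}
    (hq : ∀ k, q k = ∏ i, (X - C (r k i))) (hrs : Tendsto r l (𝓝 s))
    (hqp : ∀ z, Tendsto (fun k => (q k).eval z) l (𝓝 (p.eval z))) :
    p = ∏ i, (X - C (s i)) := by
  refine funext fun z => tendsto_nhds_unique (hqp z) ?_
  simp only [hq, eval_prod, eval_sub, eval_X, eval_C]
  exact tendsto_finsetProd _ fun i _ => tendsto_const_nhds.sub (tendsto_pi_nhds.1 hrs i)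

theorem isLocallyConstant_card_roots_filter {T : Type*} [TopologicalSpace T]
    [FirstCountableTopology T] {n : ℕ} {p : T → ℂ[X]} (hmonic : ∀ t, (p t).Monic)
    (hdeg : ∀ t, (p t).natDegree = n) (hcont : ∀ z, Continuous fun t => (p t).eval z)
    {K K' : Set ℂ} (hK : IsCompact K) (hK' : IsCompact K') (hKK' : Disjoint K K')
    (hroots : ∀ t, ∀ μ ∈ (p t).roots, μ ∈ K ∪ K') [DecidablePred (· ∈ K)] :
    IsLocallyConstant fun t => Multiset.card ((p t).roots.filter (· ∈ K)) := by
  rw [IsLocallyConstant.iff_eventually_eq]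
  intro t₀
  by_contra h
  obtain ⟨u, hu, hne⟩ := exists_seq_forall_of_frequently (not_eventually.1 h)
  choose r hr using fun k => exists_eq_prod_X_sub_C_of_natDegree_eq (hmonic (u k)) (hdeg (u k))
  have hrKK' : ∀ k, r k ∈ Set.univ.pi fun _ => K ∪ K' := fun k => by
    refine Set.mem_univ_pi.2 fun i => hroots (u k) _ ?_
    rw [hr k, roots_prod_X_sub_C_fintype]
    exact Multiset.mem_map_of_mem _ (Finset.mem_univ_val i)
  -- along a subsequence the root vectors converge, to a root vector of `p t₀`
  obtain ⟨s, -, φ, hφ, hrs⟩ := (isCompact_univ_pi fun _ => hK.union hK').tendsto_subseq hrKK'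
  have hps : p t₀ = ∏ i, (X - C (s i)) :=
    eq_prod_X_sub_C_of_tendsto (fun k => hr (φ k)) hrs
      fun z => ((hcont z).tendsto t₀).comp (hu.comp hφ.tendsto_atTop)
  have hmem : ∀ᶠ k in atTop, ∀ i, r (φ k) i ∈ K ↔ s i ∈ K := eventually_all.2 fun i =>
    (tendsto_pi_nhds.1 hrs i).eventually_mem_iff_of_disjoint hK.isClosed hK'.isClosed hKK'
      (Eventually.of_forall fun k => Set.mem_univ_pi.1 (hrKK' (φ k)) i)
  obtain ⟨k, hk⟩ := hmem.exists
  apply hne (φ k)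
  simp only [hr, hps, card_roots_filter_prod_X_sub_C, hk]

end Polynomial

namespace Matrix

open scoped Matrix.Norms.L2Operator

section

variable {𝕜 n : Type*} [RCLike 𝕜] [Fintype n] [DecidableEq n]

theorem exists_norm_sub_le_of_mem_spectrum_diagonal_add {d : n → 𝕜} {F : Matrix n n 𝕜}
    {μ : 𝕜} (hμ : μ ∈ spectrum 𝕜 (diagonal d + F)) : ∃ i, ‖μ - d i‖ ≤ ‖F‖ := by
  by_contra! hfar
  rw [spectrum.mem_iff] at hμ
  apply hμ
  have hsub : ∀ i, μ - d i ≠ 0 := fun i h => by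
    simpa [h] using (norm_nonneg F).trans_lt (hfar i)
  have hsmall : ‖diagonal (fun i => (μ - d i)⁻¹) * F‖ < 1 := by
    refine (norm_mul_le _ _).trans_lt ?_
    rcases (norm_nonneg F).eq_or_lt with hF | hF
    · simp [← hF]
    rw [l2_opNorm_diagonal, ← lt_div_iff₀ hF, one_div, pi_norm_lt_iff (by positivity)]
    intro i
    rw [norm_inv]
    exact inv_strictAnti₀ hF (hfar i)
  have hfactor : algebraMap 𝕜 _ μ - (diagonal d + F) =
      diagonal (fun i => μ - d i) * (1 - diagonal (fun i => (μ - d i)⁻¹) * F) := by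
    rw [mul_sub, mul_one, ← mul_assoc, diagonal_mul_diagonal, algebraMap_eq_diagonal]
    simp [hsub, sub_sub, ← diagonal_sub]
  rw [hfactor]
  exact (isUnit_diagonal.2 (Pi.isUnit_iff.2 fun i => (hsub i).isUnit)).mul
    (Units.oneSub _ hsmall).isUnit

theorem exists_norm_sub_le_of_mem_spectrum_conj_diagonal_add {P : Matrix n n 𝕜} (hP : IsUnit P)
    {d : n → 𝕜} {E : Matrix n n 𝕜} {μ : 𝕜}
    (hμ : μ ∈ spectrum 𝕜 (P * diagonal d * P⁻¹ + E)) :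
    ∃ i, ‖μ - d i‖ ≤ ‖P‖ * ‖P⁻¹‖ * ‖E‖ := by
  obtain ⟨u, rfl⟩ := hP
  have hconj : (u : Matrix n n 𝕜) * diagonal d * (u : Matrix n n 𝕜)⁻¹ + E =
      u * (diagonal d + (↑u⁻¹ : Matrix n n 𝕜) * E * u) * (↑u⁻¹ : Matrix n n 𝕜) := by
    simp [mul_add, add_mul, mul_assoc, coe_units_inv]
  rw [hconj, spectrum.units_conjugate] at hμ
  obtain ⟨i, hi⟩ := exists_norm_sub_le_of_mem_spectrum_diagonal_add hμ
  refine ⟨i, hi.trans ?_⟩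
  calc ‖(↑u⁻¹ : Matrix n n 𝕜) * E * u‖
      ≤ ‖(↑u⁻¹ : Matrix n n 𝕜)‖ * ‖E‖ * ‖(u : Matrix n n 𝕜)‖ := norm_mul₃_le
    _ = _ := by rw [coe_units_inv]; ring

end

theorem exists_dist_le_of_mem_roots_charpoly_add_smul {n : ℕ} {P : Matrix (Fin n) (Fin n) ℂ}
    (hP : IsUnit P) (d : Fin n → ℂ) (H : Matrix (Fin n) (Fin n) ℂ) {t : ℝ}
    (ht : t ∈ Set.Icc 0 1) {μ : ℂ} (hμ : μ ∈ (P * diagonal d * P⁻¹ + (t : ℂ) • H).charpoly.roots) :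
    ∃ i, dist μ (d i) ≤ opNorm P * opNorm P⁻¹ * opNorm H := by
  rw [mem_roots', ← mem_spectrum_iff_isRoot_charpoly] at hμ
  obtain ⟨i, hi⟩ := exists_norm_sub_le_of_mem_spectrum_conj_diagonal_add hP hμ.2
  refine ⟨i, (dist_eq_norm μ (d i)).trans_le (hi.trans ?_)⟩
  refine mul_le_mul_of_nonneg_left ?_ (by positivity)
  rw [norm_smul, Complex.norm_real, Real.norm_eq_abs, abs_of_nonneg ht.1]
  exact mul_le_of_le_one_left (norm_nonneg _) ht.2

end Matrix

theorem filter_mem_biUnion_closedBall_eq {ι X : Type*} [Fintype ι] [DecidableEq ι]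
    [PseudoMetricSpace X] {c : ι → X} {ε : ℝ} (hε : 0 ≤ ε) {I : Finset ι}
    (hdisj : Disjoint (⋃ i ∈ I, Metric.closedBall (c i) ε)
      (⋃ i ∈ Iᶜ, Metric.closedBall (c i) ε))
    [DecidablePred (· ∈ ⋃ i ∈ I, Metric.closedBall (c i) ε)] :
    Finset.univ.filter (fun i => c i ∈ ⋃ j ∈ I, Metric.closedBall (c j) ε) = I := by
  have hcenter :
      ∀ (J : Finset ι) i, i ∈ J → c i ∈ ⋃ j ∈ J, Metric.closedBall (c j) ε :=
    fun J i hi => Set.mem_biUnion hi (Metric.mem_closedBall_self hε)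
  ext i
  simp only [Finset.mem_filter, Finset.mem_univ, true_and]
  refine ⟨fun hi => ?_, hcenter I i⟩
  by_contra hiI
  exact hdisj.notMem_of_mem_left hi (hcenter Iᶜ i (Finset.mem_compl.2 hiI))

open scoped Classical in
/-- Continuity/counting part of Bauer–Fike: if the union of balls indexed by `I` is
disjoint from the union of the other balls, then the number of eigenvalues of `A + H`
(counted with multiplicity) lying in `⋃_{i ∈ I} B(λ_i, ε)` is exactly `|I|`. -/
theorem bauer_fike_counting {n : ℕ} (A D H P : Matrix (Fin n) (Fin n) ℂ)
    (d : Fin n → ℂ) (hP : IsUnit P) (hD : D = Matrix.diagonal d)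
    (hA : A = P * D * P⁻¹)
    (ε : ℝ) (hε : ε = opNorm P * opNorm P⁻¹ * opNorm H)
    (I : Finset (Fin n))
    (hdisj : Disjoint (⋃ i ∈ I, Metric.closedBall (d i) ε)
      (⋃ i ∈ (Iᶜ : Finset (Fin n)), Metric.closedBall (d i) ε)) :
    Multiset.card ((A + H).charpoly.roots.filter
      (fun μ => μ ∈ ⋃ i ∈ I, Metric.closedBall (d i) ε)) = I.card := by
  set K := ⋃ i ∈ I, Metric.closedBall (d i) ε
  set K' := ⋃ i ∈ (Iᶜ : Finset (Fin n)), Metric.closedBall (d i) ε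
  have hε₀ : 0 ≤ ε := by rw [hε]; unfold opNorm; positivity
  have hroots :
      ∀ t : unitInterval, ∀ μ ∈ (A + ((t : ℝ) : ℂ) • H).charpoly.roots, μ ∈ K ∪ K' := by
    intro t μ hμ
    rw [hA, hD] at hμ
    obtain ⟨i, hi⟩ := Matrix.exists_dist_le_of_mem_roots_charpoly_add_smul hP d H t.2 hμ
    by_cases hiI : i ∈ I
    · exact Or.inl (Set.mem_biUnion hiI (hε ▸ hi))
    · exact Or.inr (Set.mem_biUnion (Finset.mem_compl.2 hiI) (hε ▸ hi))
  have hcont :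
      ∀ z, Continuous fun t : unitInterval => (A + ((t : ℝ) : ℂ) • H).charpoly.eval z :=
    fun z => by simp only [Matrix.eval_charpoly]; fun_prop
  have hconst := (isLocallyConstant_card_roots_filter (fun t => Matrix.charpoly_monic _)
    (fun t => Matrix.charpoly_natDegree_eq_dim _) hcont
    (I.isCompact_biUnion fun i _ => isCompact_closedBall _ _)
    (Iᶜ.isCompact_biUnion fun i _ => isCompact_closedBall _ _) hdisj hroots
    ).apply_eq_of_preconnectedSpace 1 0
  simp only [Set.Icc.coe_one, Set.Icc.coe_zero, Complex.ofReal_one, Complex.ofReal_zero, one_smul,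
    zero_smul, add_zero] at hconst
  obtain ⟨u, rfl⟩ := hP
  rw [hconst, hA, hD, Matrix.charpoly_units_conj, Matrix.charpoly_diagonal,
    card_roots_filter_prod_X_sub_C, filter_mem_biUnion_closedBall_eq hε₀ hdisj]
end
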